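/- Let H₁, H₂ be complex Hilbert spaces and let G : H₁ × H₂ → H₁ × H₂ be a bounded operator written in block form G = [[G₁₁, G₁₂],[G₂₁, G₂₂]]. Suppose the diagonal part D = [[G₁₁,0],[0,G₂₂]] satisfies a T-coercivity estimate Re⟨D z, X z⟩ ≥ C‖z‖² − Re⟨K₁ z, z⟩ for an isomorphism X of H₁ × H₂, a compact K₁, and C > 0, and suppose the off-diagonal part satisfies Re⟨(G − D) z, X z⟩ = Re⟨K₂ z, z⟩ for a compact operator K₂ and all z. Then G is Fredholm of index 0. -/

import Mathlib

/-- A bounded operator is Fredholm of index 0. -/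
def IsFredholmIndexZero {E : Type*} [NormedAddCommGroup E] [NormedSpace ℂ E]
    (A : E →L[ℂ] E) : Prop :=
  FiniteDimensional ℂ (LinearMap.ker (A : E →ₗ[ℂ] E)) ∧
  IsClosed ((LinearMap.range (A : E →ₗ[ℂ] E) : Submodule ℂ E) : Set E) ∧
  FiniteDimensional ℂ (E ⧸ LinearMap.range (A : E →ₗ[ℂ] E)) ∧
  Module.finrank ℂ (LinearMap.ker (A : E →ₗ[ℂ] E)) = Module.finrank ℂ (E ⧸ LinearMap.range (A : E →ₗ[ℂ] E))

noncomputable section AuxFredholm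

open ContinuousLinearMap Submodule Module Metric Filter Topology

variable {E : Type*} [NormedAddCommGroup E] [InnerProductSpace ℂ E] [CompleteSpace E]

local notation "⟪" x ", " y "⟫" => @inner ℂ _ _ x y

lemma aux_no_sep_seq {K : E →L[ℂ] E} (hK : IsCompactOperator K)
    (x : ℕ → E) (hx : ∀ n, ‖x n‖ ≤ 1)
    (hsep : ∀ m n, m < n → 1 ≤ ‖K (x m) - K (x n)‖) : False := by
  have hS : IsCompact (closure (K '' closedBall 0 1)) :=
    hK.isCompact_closure_image_closedBall 1
  have hmem : ∀ n, K (x n) ∈ closure (K '' closedBall 0 1) := fun n =>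
    subset_closure ⟨x n, by simpa [mem_closedBall, dist_zero_right] using hx n, rfl⟩
  obtain ⟨y, -, φ, hφ, hconv⟩ := hS.tendsto_subseq hmem
  have hc : CauchySeq (fun n => K (x (φ n))) := hconv.cauchySeq
  rw [Metric.cauchySeq_iff] at hc
  obtain ⟨N, hN⟩ := hc 1 one_pos
  have h2 := hN (N + 1) (by omega) N le_rfl
  rw [dist_eq_norm, norm_sub_rev] at h2
  have h1 := hsep (φ N) (φ (N + 1)) (hφ (by omega))
  linarith

lemma aux_ker_findim {K : E →L[ℂ] E} (hK : IsCompactOperator K) :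
    FiniteDimensional ℂ (LinearMap.ker ((1 - K : E →L[ℂ] E) : E →ₗ[ℂ] E)) := by
  set T : E →L[ℂ] E := 1 - K with hT
  have hS : IsCompact (closure (K '' closedBall 0 1)) :=
    hK.isCompact_closure_image_closedBall 1
  set Q : Set E := (LinearMap.ker (T : E →ₗ[ℂ] E) : Set E) ∩ closedBall 0 1 with hQ
  have hQc : IsCompact Q := by
    refine hS.of_isClosed_subset ((ContinuousLinearMap.isClosed_ker T).inter isClosed_closedBall) ?_
    rintro z ⟨hz1, hz2⟩
    have : z = K z := by
      have : T z = 0 := hz1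
      simpa [hT, sub_eq_zero] using this
    exact subset_closure ⟨z, hz2, this.symm⟩
  apply FiniteDimensional.of_isCompact_closedBall₀ ℂ (one_pos (α := ℝ))
  have : (Metric.closedBall (0 : LinearMap.ker (T : E →ₗ[ℂ] E)) 1) = Subtype.val ⁻¹' Q := by
    ext z
    constructor
    · intro hz
      refine ⟨z.2, ?_⟩
      simpa [mem_closedBall, dist_zero_right] using hz
    · intro hz
      simpa [mem_closedBall, dist_zero_right] using hz.2
  rw [this]
  have hemb : Topology.IsClosedEmbedding (Subtype.val : LinearMap.ker (T : E →ₗ[ℂ] E) → E) :=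
    Topology.IsClosedEmbedding.subtypeVal (ContinuousLinearMap.isClosed_ker T)
  exact hemb.isCompact_preimage hQc
set_option linter.unusedSectionVars false

lemma aux_bounded_below {K : E →L[ℂ] E} (hK : IsCompactOperator K) :
    ∃ c : ℝ, 0 < c ∧ ∀ z ∈ (LinearMap.ker ((1 - K : E →L[ℂ] E) : E →ₗ[ℂ] E))ᗮ, c * ‖z‖ ≤ ‖(1 - K) z‖ := by
  set T : E →L[ℂ] E := 1 - K with hT
  set N := LinearMap.ker (T : E →ₗ[ℂ] E) with hN
  by_contra hcon
  push_neg at hcon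
  have hseq : ∀ n : ℕ, ∃ x : E, x ∈ Nᗮ ∧ ‖x‖ = 1 ∧ ‖T x‖ < (n + 1 : ℝ)⁻¹ := by
    intro n
    obtain ⟨z, hzM, hz⟩ := hcon ((n + 1 : ℝ)⁻¹ / 2) (by positivity)
    have hz0 : z ≠ 0 := by
      rintro rfl
      simp at hz
    have hzpos : (0:ℝ) < ‖z‖ := norm_pos_iff.mpr hz0
    have h5 : ‖((‖z‖⁻¹ : ℝ) : ℂ)‖ = ‖z‖⁻¹ := by
      rw [Complex.norm_real, norm_inv, norm_norm]
    refine ⟨((‖z‖⁻¹ : ℝ) : ℂ) • z, Submodule.smul_mem _ _ hzM, ?_, ?_⟩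
    · rw [norm_smul, h5, inv_mul_cancel₀ (norm_ne_zero_iff.mpr hz0)]
    · rw [map_smul, norm_smul, h5]
      have hpos : (0:ℝ) < ((n:ℝ) + 1)⁻¹ := by positivity
      have h4 : ‖T z‖ < ((n:ℝ) + 1)⁻¹ * ‖z‖ := by
        push_cast at hz ⊢
        nlinarith
      rw [inv_mul_lt_iff₀ hzpos, mul_comm]
      push_cast
      exact h4
  choose x hx1 hx2 hx3 using hseq
  have hTx : Filter.Tendsto (fun n => T (x n)) Filter.atTop (nhds 0) := by
    rw [tendsto_zero_iff_norm_tendsto_zero]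
    have hb : ∀ n : ℕ, ‖T (x n)‖ ≤ 1 / ((n : ℝ) + 1) := by
      intro n
      rw [one_div]
      exact (hx3 n).le
    exact squeeze_zero (fun n => norm_nonneg _) hb tendsto_one_div_add_atTop_nhds_zero_nat
  have hS : IsCompact (closure (K '' Metric.closedBall 0 1)) :=
    hK.isCompact_closure_image_closedBall 1
  have hmem : ∀ n, K (x n) ∈ closure (K '' Metric.closedBall 0 1) := fun n =>
    subset_closure ⟨x n, by simp [Metric.mem_closedBall, dist_zero_right, hx2 n], rfl⟩
  obtain ⟨y, -, φ, hφ, hconv⟩ := hS.tendsto_subseq hmem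
  have hxconv : Filter.Tendsto (fun n => x (φ n)) Filter.atTop (nhds y) := by
    have : (fun n => x (φ n)) = fun n => T (x (φ n)) + K (x (φ n)) := by
      funext n
      simp [hT, sub_apply]
    rw [this]
    have h0 : Filter.Tendsto (fun n => T (x (φ n))) Filter.atTop (nhds 0) :=
      hTx.comp hφ.tendsto_atTop
    simpa using h0.add hconv
  have hy1 : ‖y‖ = 1 := by
    have := (continuous_norm.tendsto y).comp hxconv
    have h2 : Filter.Tendsto (fun n => ‖x (φ n)‖) Filter.atTop (nhds 1) := by
      simpa [hx2] using Filter.tendsto_const_nhds (α := ℝ) (x := 1)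
    exact tendsto_nhds_unique this h2
  have hyM : y ∈ Nᗮ := by
    have hcl : IsClosed (Nᗮ : Set E) := Submodule.isClosed_orthogonal N
    exact hcl.mem_of_tendsto hxconv (Filter.Eventually.of_forall fun n => hx1 _)
  have hyN : y ∈ N := by
    have := (T.continuous.tendsto y).comp hxconv
    have h0 : Filter.Tendsto (fun n => T (x (φ n))) Filter.atTop (nhds 0) :=
      hTx.comp hφ.tendsto_atTop
    have : T y = 0 := tendsto_nhds_unique this h0
    exact this
  have : y = 0 := by
    have h0 : (inner ℂ y y : ℂ) = 0 := (Submodule.mem_orthogonal N y).mp hyM y hyN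
    simpa using h0
  rw [this] at hy1
  simp at hy1

lemma aux_closed_range {K : E →L[ℂ] E} (hK : IsCompactOperator K) :
    IsClosed ((LinearMap.range ((1 - K : E →L[ℂ] E) : E →ₗ[ℂ] E) : Submodule ℂ E) : Set E) := by
  set T : E →L[ℂ] E := 1 - K with hT
  set N := LinearMap.ker (T : E →ₗ[ℂ] E) with hN
  haveI : FiniteDimensional ℂ N := aux_ker_findim hK
  haveI : CompleteSpace N := FiniteDimensional.complete ℂ N
  obtain ⟨c, hc, hbb⟩ := aux_bounded_below hK
  set Tres : Nᗮ →L[ℂ] E := T.comp (Nᗮ).subtypeL with hTres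
  have hanti : AntilipschitzWith (c⁻¹.toNNReal) Tres := by
    apply ContinuousLinearMap.antilipschitz_of_bound
    intro z
    have := hbb z z.2
    rw [Real.coe_toNNReal _ (le_of_lt (inv_pos.mpr hc))]
    rw [← inv_mul_le_iff₀ (inv_pos.mpr hc), inv_inv]
    simpa [hTres, hT] using this
  have hclosed : IsClosed (Set.range Tres) :=
    hanti.isClosed_range Tres.uniformContinuous
  have heq : ((LinearMap.range (T : E →ₗ[ℂ] E) : Submodule ℂ E) : Set E) = Set.range Tres := by
    ext y
    constructor
    · rintro ⟨z, rfl⟩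
      refine ⟨⟨z - (orthogonalProjection N z : E), sub_starProjection_mem_orthogonal (K := N) z⟩, ?_⟩
      have hker : T ((orthogonalProjection N z : E)) = 0 := (orthogonalProjection N z).2
      simp only [hTres, ContinuousLinearMap.comp_apply, Submodule.subtypeL_apply, map_sub, hker,
        sub_zero, ContinuousLinearMap.coe_coe]
    · rintro ⟨z, rfl⟩
      exact ⟨z, rfl⟩
  rw [heq]
  exact hclosed

lemma aux_pow {K : E →L[ℂ] E} (hK : IsCompactOperator K) (n : ℕ) :
    ∃ K' : E →L[ℂ] E, IsCompactOperator K' ∧ (1 - K) ^ n = 1 - K' := by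
  induction n with
  | zero => exact ⟨0, isCompactOperator_zero, by simp⟩
  | succ n ih =>
    obtain ⟨K', hK', h⟩ := ih
    refine ⟨K' + K - K'.comp K, ?_, ?_⟩
    · have h1 : IsCompactOperator (⇑K' + ⇑K) := hK'.add hK
      have h2 : IsCompactOperator (⇑K' ∘ ⇑K) := hK'.comp_clm K
      have h3 : IsCompactOperator (⇑K' + ⇑K - ⇑K' ∘ ⇑K) := h1.sub h2
      have : ⇑(K' + K - K'.comp K) = ⇑K' + ⇑K - ⇑K' ∘ ⇑K := by
        funext z; simp [ContinuousLinearMap.coe_comp']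
      rw [this]
      exact h3
    · rw [pow_succ, h]
      simp only [ContinuousLinearMap.mul_def]
      ext z
      simp [sub_apply, ContinuousLinearMap.comp_apply, map_sub]
      abel

lemma aux_findim_compact {V : Type*} [NormedAddCommGroup V] [NormedSpace ℂ V]
    [FiniteDimensional ℂ V] (g : E →L[ℂ] V) (h : V →L[ℂ] E) :
    IsCompactOperator (h ∘L g : E →L[ℂ] E) := by
  refine ⟨h '' Metric.closedBall 0 ‖g‖, ?_, ?_⟩
  · exact (isCompact_closedBall 0 ‖g‖).image h.continuous
  · apply Filter.mem_of_superset (Metric.closedBall_mem_nhds (0 : E) one_pos)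
    intro z hz
    refine ⟨g z, ?_, rfl⟩
    rw [Metric.mem_closedBall, dist_zero_right]
    exact g.unit_le_opNorm z (by simpa [Metric.mem_closedBall, dist_zero_right] using hz)

lemma aux_surj_of_inj {K : E →L[ℂ] E} (hK : IsCompactOperator K)
    (hinj : LinearMap.ker ((1 - K : E →L[ℂ] E) : E →ₗ[ℂ] E) = ⊥) : LinearMap.range ((1 - K : E →L[ℂ] E) : E →ₗ[ℂ] E) = ⊤ := by
  set T : E →L[ℂ] E := 1 - K with hT
  by_contra hsurj
  set R : ℕ → Submodule ℂ E := fun n => LinearMap.range ((T ^ n : E →L[ℂ] E) : E →ₗ[ℂ] E) with hR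
  have hRclosed : ∀ n, IsClosed ((R n : Submodule ℂ E) : Set E) := by
    intro n
    obtain ⟨K', hK', hpow⟩ := aux_pow hK n
    rw [hR]
    simp only
    rw [hpow]
    exact aux_closed_range hK'
  have hTinj : Function.Injective T := by
    rw [← ContinuousLinearMap.coe_coe, ← LinearMap.ker_eq_bot]
    exact hinj
  have hTinj_n : ∀ n, Function.Injective (⇑(T ^ n)) := by
    intro n
    induction n with
    | zero => simp [Function.Injective]
    | succ n ih =>
      rw [pow_succ]
      intro a b hab
      exact hTinj (ih hab)
  have hmaps : ∀ n (x : E), x ∈ R n → T x ∈ R (n + 1) := by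
    rintro n x ⟨u, rfl⟩
    exact ⟨u, by rw [pow_succ']; rfl⟩
  have hmono : ∀ n, R (n + 1) ≤ R n := by
    rintro n x ⟨u, rfl⟩
    rw [pow_succ]
    exact ⟨T u, rfl⟩
  have hanti : Antitone R := antitone_nat_of_succ_le hmono
  have hstrict : ∀ n, R (n + 1) < R n := by
    intro n
    refine lt_of_le_of_ne (hmono n) ?_
    intro heq
    apply hsurj
    rw [LinearMap.range_eq_top]
    intro y
    have hyn : (T ^ n) y ∈ R (n + 1) := by
      rw [heq]
      exact ⟨y, rfl⟩
    obtain ⟨u, hu⟩ := hyn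
    refine ⟨u, hTinj_n n ?_⟩
    rw [← hu, pow_succ]
    rfl
  have hx : ∀ n, ∃ x : E, x ∈ R n ∧ x ∈ (R (n + 1))ᗮ ∧ ‖x‖ = 1 := by
    intro n
    haveI : CompleteSpace (R (n + 1)) := (hRclosed (n + 1)).completeSpace_coe
    obtain ⟨v, hv1, hv2⟩ := SetLike.exists_of_lt (hstrict n)
    set w := v - (orthogonalProjection (R (n + 1)) v : E) with hw
    have hw1 : w ∈ R n := by
      apply Submodule.sub_mem _ hv1
      exact hmono n (orthogonalProjection (R (n + 1)) v).2
    have hw2 : w ∈ (R (n + 1))ᗮ := sub_starProjection_mem_orthogonal (K := R (n + 1)) v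
    have hw0 : w ≠ 0 := by
      intro h0
      apply hv2
      rw [hw, sub_eq_zero] at h0
      rw [h0]
      exact (orthogonalProjection (R (n + 1)) v).2
    have hwpos : (0:ℝ) < ‖w‖ := norm_pos_iff.mpr hw0
    refine ⟨((‖w‖⁻¹ : ℝ) : ℂ) • w, Submodule.smul_mem _ _ hw1, Submodule.smul_mem _ _ hw2, ?_⟩
    rw [norm_smul, Complex.norm_real, norm_inv, norm_norm,
      inv_mul_cancel₀ (norm_ne_zero_iff.mpr hw0)]
  choose x hx1 hx2 hx3 using hx
  apply aux_no_sep_seq hK x (fun n => (hx3 n).le)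
  intro m n hmn
  have hKe : ∀ k, K (x k) = x k - T (x k) := by
    intro k
    simp [hT, sub_apply]
  rw [hKe, hKe]
  have hv : (T (x m) + x n - T (x n)) ∈ R (m + 1) := by
    refine Submodule.sub_mem _ (Submodule.add_mem _ ?_ ?_) ?_
    · exact hmaps m _ (hx1 m)
    · exact hanti hmn (hx1 n)
    · exact hanti (by omega : m + 1 ≤ n + 1) (hmaps n _ (hx1 n))
  have hperp : (inner ℂ (x m) (T (x m) + x n - T (x n)) : ℂ) = 0 := by
    rw [inner_eq_zero_symm]
    exact (Submodule.mem_orthogonal _ _).mp (hx2 m) _ hv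
  have hcalc : x m - T (x m) - (x n - T (x n)) = x m - (T (x m) + x n - T (x n)) := by abel
  rw [hcalc]
  have hpyth : ‖x m - (T (x m) + x n - T (x n))‖ ^ 2 =
      ‖x m‖ ^ 2 - 2 * (inner ℂ (x m) (T (x m) + x n - T (x n)) : ℂ).re +
        ‖T (x m) + x n - T (x n)‖ ^ 2 := norm_sub_sq (𝕜 := ℂ) _ _
  rw [hperp] at hpyth
  simp only [Complex.zero_re, mul_zero, sub_zero] at hpyth
  rw [hx3 m] at hpyth
  nlinarith [norm_nonneg (x m - (T (x m) + x n - T (x n))),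
    sq_nonneg (‖T (x m) + x n - T (x n)‖)]

lemma aux_inj_of_surj {K : E →L[ℂ] E} (hK : IsCompactOperator K)
    (hsurj : LinearMap.range ((1 - K : E →L[ℂ] E) : E →ₗ[ℂ] E) = ⊤) : LinearMap.ker ((1 - K : E →L[ℂ] E) : E →ₗ[ℂ] E) = ⊥ := by
  set T : E →L[ℂ] E := 1 - K with hT
  by_contra hker
  obtain ⟨u, hu, hu0⟩ := Submodule.exists_mem_ne_zero_of_ne_bot hker
  have hTu : T u = 0 := hu
  set N : ℕ → Submodule ℂ E := fun n => LinearMap.ker ((T ^ n : E →L[ℂ] E) : E →ₗ[ℂ] E) with hNdef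
  have hNclosed : ∀ n, IsClosed ((N n : Submodule ℂ E) : Set E) := fun n =>
    ContinuousLinearMap.isClosed_ker (T ^ n)
  have hTsurj : Function.Surjective T := by
    rw [← ContinuousLinearMap.coe_coe, ← LinearMap.range_eq_top]
    exact hsurj
  have hTsurj_n : ∀ n, Function.Surjective (⇑(T ^ n)) := by
    intro n
    induction n with
    | zero => intro b; exact ⟨b, by simp⟩
    | succ n ih =>
      rw [pow_succ']
      exact fun y => by
        obtain ⟨z, hz⟩ := hTsurj y
        obtain ⟨w, hw⟩ := ih z
        exact ⟨w, by simp [ContinuousLinearMap.mul_apply, hw, hz]⟩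
  have hmono : ∀ n, N n ≤ N (n + 1) := by
    intro n z hz
    have : (T ^ n) z = 0 := hz
    show (T ^ (n + 1)) z = 0
    rw [pow_succ']
    show T ((T ^ n) z) = 0
    rw [this, map_zero]
  have hmonotone : Monotone N := monotone_nat_of_le_succ hmono
  have hstrict : ∀ n, N n < N (n + 1) := by
    intro n
    refine lt_of_le_of_ne (hmono n) ?_
    intro heq
    obtain ⟨z, hz⟩ := hTsurj_n n u
    have hz1 : z ∈ N (n + 1) := by
      show (T ^ (n + 1)) z = 0
      rw [pow_succ']
      show T ((T ^ n) z) = 0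
      rw [hz, hTu]
    rw [← heq] at hz1
    have : (T ^ n) z = 0 := hz1
    rw [hz] at this
    exact hu0 this
  have hx : ∀ n, ∃ x : E, x ∈ N (n + 1) ∧ x ∈ (N n)ᗮ ∧ ‖x‖ = 1 := by
    intro n
    haveI : CompleteSpace (N n) := (hNclosed n).completeSpace_coe
    obtain ⟨v, hv1, hv2⟩ := SetLike.exists_of_lt (hstrict n)
    set w := v - (orthogonalProjection (N n) v : E) with hw
    have hw1 : w ∈ N (n + 1) := by
      apply Submodule.sub_mem _ hv1
      exact hmono n (orthogonalProjection (N n) v).2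
    have hw2 : w ∈ (N n)ᗮ := sub_starProjection_mem_orthogonal (K := N n) v
    have hw0 : w ≠ 0 := by
      intro h0
      apply hv2
      rw [hw, sub_eq_zero] at h0
      rw [h0]
      exact (orthogonalProjection (N n) v).2
    have hwpos : (0:ℝ) < ‖w‖ := norm_pos_iff.mpr hw0
    refine ⟨((‖w‖⁻¹ : ℝ) : ℂ) • w, Submodule.smul_mem _ _ hw1, Submodule.smul_mem _ _ hw2, ?_⟩
    rw [norm_smul, Complex.norm_real, norm_inv, norm_norm,
      inv_mul_cancel₀ (norm_ne_zero_iff.mpr hw0)]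
  choose x hx1 hx2 hx3 using hx
  apply aux_no_sep_seq hK x (fun n => (hx3 n).le)
  intro m n hmn
  have hKe : ∀ k, K (x k) = x k - T (x k) := by
    intro k
    simp [hT, sub_apply]
  rw [hKe, hKe, norm_sub_rev]
  have hTNsub : ∀ k (z : E), z ∈ N (k + 1) → T z ∈ N k := by
    intro k z hz
    show (T ^ k) (T z) = 0
    have : (T ^ (k + 1)) z = 0 := hz
    rw [pow_succ] at this
    exact this
  have hv : (T (x n) + x m - T (x m)) ∈ N n := by
    refine Submodule.sub_mem _ (Submodule.add_mem _ ?_ ?_) ?_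
    · exact hTNsub n _ (hx1 n)
    · exact hmonotone (by omega : m + 1 ≤ n) (hx1 m)
    · exact hmonotone (by omega : m ≤ n) (hTNsub m _ (hx1 m))
  have hperp : (inner ℂ (x n) (T (x n) + x m - T (x m)) : ℂ) = 0 := by
    rw [inner_eq_zero_symm]
    exact (Submodule.mem_orthogonal _ _).mp (hx2 n) _ hv
  have hcalc : x n - T (x n) - (x m - T (x m)) = x n - (T (x n) + x m - T (x m)) := by abel
  rw [hcalc]
  have hpyth : ‖x n - (T (x n) + x m - T (x m))‖ ^ 2 =
      ‖x n‖ ^ 2 - 2 * (inner ℂ (x n) (T (x n) + x m - T (x m)) : ℂ).re +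
        ‖T (x n) + x m - T (x m)‖ ^ 2 := norm_sub_sq (𝕜 := ℂ) _ _
  rw [hperp] at hpyth
  simp only [Complex.zero_re, mul_zero, sub_zero] at hpyth
  rw [hx3 n] at hpyth
  nlinarith [norm_nonneg (x n - (T (x n) + x m - T (x m))),
    sq_nonneg (‖T (x n) + x m - T (x m)‖)]

lemma aux_coker_le {K : E →L[ℂ] E} (hK : IsCompactOperator K) :
    FiniteDimensional ℂ ((LinearMap.range ((1 - K : E →L[ℂ] E) : E →ₗ[ℂ] E))ᗮ : Submodule ℂ E) ∧
      Module.finrank ℂ ((LinearMap.range ((1 - K : E →L[ℂ] E) : E →ₗ[ℂ] E))ᗮ : Submodule ℂ E) ≤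
        Module.finrank ℂ (LinearMap.ker ((1 - K : E →L[ℂ] E) : E →ₗ[ℂ] E)) := by
  set T : E →L[ℂ] E := 1 - K with hTdef
  set N : Submodule ℂ E := LinearMap.ker (T : E →ₗ[ℂ] E) with hNdef
  set W : Submodule ℂ E := (LinearMap.range (T : E →ₗ[ℂ] E))ᗮ with hWdef
  haveI hNfd : FiniteDimensional ℂ N := aux_ker_findim hK
  haveI : CompleteSpace N := FiniteDimensional.complete ℂ N
  set n : ℕ := Module.finrank ℂ N with hn
  by_contra hcon
  have hrank : ((n + 1 : ℕ) : Cardinal) ≤ Module.rank ℂ W := by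
    by_cases hfd : FiniteDimensional ℂ W
    · have hlt : n < Module.finrank ℂ W := by
        by_contra hle
        exact hcon ⟨hfd, by omega⟩
      rw [← Module.finrank_eq_rank]
      exact_mod_cast hlt
    · have h1 : Cardinal.aleph0 ≤ Module.rank ℂ W := by
        by_contra h2
        exact hfd (Module.rank_lt_aleph0_iff.mp (lt_of_not_ge h2))
      exact le_trans (le_of_lt (Cardinal.nat_lt_aleph0 _)) h1
  obtain ⟨f, hf⟩ := exists_linearIndependent_of_le_rank hrank
  set b : Basis (Fin n) ℂ N := Module.finBasis ℂ N with hb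
  set j : N →ₗ[ℂ] W := Basis.constr b ℂ (fun i => f i.castSucc) with hj
  have hfc : LinearIndependent ℂ (fun i : Fin n => f i.castSucc) :=
    hf.comp Fin.castSucc (Fin.castSucc_injective _)
  have hjb : ∀ i, j (b i) = f i.castSucc := fun i => Basis.constr_basis b ℂ _ i
  have hinj : Function.Injective j := by
    rw [← LinearMap.ker_eq_bot]
    rw [LinearMap.ker_eq_bot']
    intro x hx0
    have hxrepr : x = ∑ i, b.repr x i • b i := (b.sum_repr x).symm
    have hsum : ∑ i, b.repr x i • f i.castSucc = 0 := by
      calc ∑ i, b.repr x i • f i.castSucc = ∑ i, b.repr x i • j (b i) := by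
            simp only [hjb]
        _ = j (∑ i, b.repr x i • b i) := by rw [map_sum]; simp only [map_smul]
        _ = j x := by rw [← hxrepr]
        _ = 0 := hx0
    have hz := Fintype.linearIndependent_iff.mp hfc _ hsum
    rw [hxrepr]
    simp [hz]
  have hlast : f (Fin.last n) ∉ LinearMap.range j := by
    rintro ⟨x, hx⟩
    set g : Fin (n + 1) → ℂ := Fin.snoc (fun i => b.repr x i) (-1) with hg
    have hsum : ∑ k : Fin (n + 1), g k • f k = 0 := by
      rw [Fin.sum_univ_castSucc]
      simp only [hg, Fin.snoc_castSucc, Fin.snoc_last]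
      have : ∑ i, b.repr x i • f i.castSucc = j x := by
        calc ∑ i, b.repr x i • f i.castSucc = ∑ i, b.repr x i • j (b i) := by
              simp only [hjb]
          _ = j (∑ i, b.repr x i • b i) := by rw [map_sum]; simp only [map_smul]
          _ = j x := by rw [← (b.sum_repr x).symm]
      rw [this, hx]
      simp
    have := Fintype.linearIndependent_iff.mp hf _ hsum (Fin.last n)
    rw [hg] at this
    simp [Fin.snoc_last] at this
  -- build the compact correction
  set P : E →L[ℂ] N := orthogonalProjection N with hP
  set jc : N →L[ℂ] E := LinearMap.toContinuousLinearMap (W.subtype ∘ₗ j) with hjc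
  set F : E →L[ℂ] E := jc ∘L P with hF
  have hFz : ∀ z : E, F z = ((j (P z) : W) : E) := by
    intro z
    simp [hF, hjc, ContinuousLinearMap.comp_apply, LinearMap.coe_toContinuousLinearMap']
  have hFcomp : IsCompactOperator F := aux_findim_compact P jc
  set T' : E →L[ℂ] E := 1 - (K - F) with hT'
  have hK' : IsCompactOperator ⇑(K - F) := by
    have : ⇑(K - F) = ⇑K - ⇑F := by funext z; simp
    rw [this]
    exact hK.sub hFcomp
  have hT'z : ∀ z : E, T' z = T z + F z := by
    intro z
    simp [hT', hTdef, sub_apply]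
    abel
  have hdisj := (LinearMap.range (T : E →ₗ[ℂ] E)).orthogonal_disjoint
  have hker' : LinearMap.ker (T' : E →ₗ[ℂ] E) = ⊥ := by
    rw [LinearMap.ker_eq_bot']
    intro z hz0
    have hz : T z + F z = 0 := by rw [← hT'z]; exact hz0
    have hTzW : T z ∈ W := by
      have h3 : T z = -F z := eq_neg_of_add_eq_zero_left hz
      rw [h3]
      exact Submodule.neg_mem _ (by rw [hFz]; exact (j (P z)).2)
    have hTz0 : T z = 0 := Submodule.disjoint_def.mp hdisj _ ⟨z, rfl⟩ hTzW
    have hFz0 : F z = 0 := by rw [hTz0, zero_add] at hz; exact hz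
    have hzN : z ∈ N := hTz0
    have hPz : P z = ⟨z, hzN⟩ := orthogonalProjection_mem_subspace_eq_self (⟨z, hzN⟩ : N)
    have : ((j (⟨z, hzN⟩ : N) : W) : E) = 0 := by rw [← hPz, ← hFz]; exact hFz0
    have hj0 : j (⟨z, hzN⟩ : N) = 0 := by exact_mod_cast this
    have := hinj (by rw [hj0, map_zero] : j (⟨z, hzN⟩ : N) = j 0)
    exact congrArg Subtype.val this
  have hsurj' : LinearMap.range (T' : E →ₗ[ℂ] E) = ⊤ := aux_surj_of_inj hK' hker'
  obtain ⟨z, hz⟩ : ∃ z, T' z = ((f (Fin.last n) : W) : E) := by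
    have : ((f (Fin.last n) : W) : E) ∈ LinearMap.range (T' : E →ₗ[ℂ] E) := by rw [hsurj']; trivial
    exact this
  rw [hT'z] at hz
  have hTzW : T z ∈ W := by
    have h3 : T z = ((f (Fin.last n) - j (P z) : W) : E) := by
      push_cast
      rw [← hFz]
      exact eq_sub_of_add_eq hz
    rw [h3]
    exact (f (Fin.last n) - j (P z)).2
  have hTz0 : T z = 0 := Submodule.disjoint_def.mp hdisj _ ⟨z, rfl⟩ hTzW
  apply hlast
  refine ⟨P z, ?_⟩
  rw [hTz0, zero_add, hFz] at hz
  exact_mod_cast hz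

lemma aux_ker_le {K : E →L[ℂ] E} (hK : IsCompactOperator K)
    (hWfd : FiniteDimensional ℂ ((LinearMap.range ((1 - K : E →L[ℂ] E) : E →ₗ[ℂ] E))ᗮ : Submodule ℂ E)) :
    Module.finrank ℂ (LinearMap.ker ((1 - K : E →L[ℂ] E) : E →ₗ[ℂ] E)) ≤
      Module.finrank ℂ ((LinearMap.range ((1 - K : E →L[ℂ] E) : E →ₗ[ℂ] E))ᗮ : Submodule ℂ E) := by
  set T : E →L[ℂ] E := 1 - K with hTdef
  set N : Submodule ℂ E := LinearMap.ker (T : E →ₗ[ℂ] E) with hNdef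
  set W : Submodule ℂ E := (LinearMap.range (T : E →ₗ[ℂ] E))ᗮ with hWdef
  haveI hNfd : FiniteDimensional ℂ N := aux_ker_findim hK
  haveI : CompleteSpace N := FiniteDimensional.complete ℂ N
  haveI : CompleteSpace (LinearMap.range (T : E →ₗ[ℂ] E)) := (aux_closed_range hK).completeSpace_coe
  set n : ℕ := Module.finrank ℂ N with hn
  set m : ℕ := Module.finrank ℂ W with hm
  by_contra hcon
  have hlt : m < n := by omega
  set b : Basis (Fin n) ℂ N := Module.finBasis ℂ N with hb
  set w : Basis (Fin m) ℂ W := Module.finBasis ℂ W with hw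
  set j : N →ₗ[ℂ] W :=
    Basis.constr b ℂ (fun i => if h : (i : ℕ) < m then w ⟨(i : ℕ), h⟩ else 0) with hj
  have hjb : ∀ i, j (b i) = if h : (i : ℕ) < m then w ⟨(i : ℕ), h⟩ else 0 := fun i =>
    Basis.constr_basis b ℂ _ i
  have hjw : ∀ k : Fin m, w k ∈ LinearMap.range j := by
    intro k
    refine ⟨b ⟨(k : ℕ), lt_trans k.2 hlt⟩, ?_⟩
    rw [hjb]
    rw [dif_pos (show ((⟨(k : ℕ), lt_trans k.2 hlt⟩ : Fin n) : ℕ) < m from k.2)]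
  have hjsurj : Function.Surjective j := by
    rw [← LinearMap.range_eq_top, eq_top_iff]
    intro y _
    have hyrepr : y = ∑ k, w.repr y k • w k := (w.sum_repr y).symm
    rw [hyrepr]
    exact Submodule.sum_mem _ fun k _ => Submodule.smul_mem _ _ (hjw k)
  set z₀ : N := b ⟨m, hlt⟩ with hz₀
  have hjz₀ : j z₀ = 0 := by
    rw [hz₀, hjb]
    exact dif_neg (by simp)
  -- compact correction
  set P : E →L[ℂ] N := orthogonalProjection N with hP
  set jc : N →L[ℂ] E := LinearMap.toContinuousLinearMap (W.subtype ∘ₗ j) with hjc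
  set F : E →L[ℂ] E := jc ∘L P with hF
  have hFz : ∀ z : E, F z = ((j (P z) : W) : E) := by
    intro z
    simp [hF, hjc, ContinuousLinearMap.comp_apply, LinearMap.coe_toContinuousLinearMap']
  have hFcomp : IsCompactOperator F := aux_findim_compact P jc
  set T' : E →L[ℂ] E := 1 - (K - F) with hT'
  have hK' : IsCompactOperator ⇑(K - F) := by
    have : ⇑(K - F) = ⇑K - ⇑F := by funext z; simp
    rw [this]
    exact hK.sub hFcomp
  have hT'z : ∀ z : E, T' z = T z + F z := by
    intro z
    simp [hT', hTdef, sub_apply]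
    abel
  have hsurj' : LinearMap.range (T' : E →ₗ[ℂ] E) = ⊤ := by
    rw [LinearMap.range_eq_top]
    intro y
    have hy : y ∈ LinearMap.range (T : E →ₗ[ℂ] E) ⊔ W := by
      rw [Submodule.isCompl_orthogonal_of_hasOrthogonalProjection.sup_eq_top]
      trivial
    obtain ⟨u, hu, v, hv, huv⟩ := Submodule.mem_sup.mp hy
    obtain ⟨x, hx⟩ := hu
    obtain ⟨k, hk⟩ := hjsurj ⟨v, hv⟩
    refine ⟨x - ((P x : N) : E) + ((k : N) : E), ?_⟩
    have hPz : P (x - ((P x : N) : E) + ((k : N) : E)) = k := by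
      rw [map_add, map_sub]
      rw [orthogonalProjection_mem_subspace_eq_self (P x)]
      rw [orthogonalProjection_mem_subspace_eq_self k]
      simp
    have hTPx : T ((P x : N) : E) = 0 := (P x).2
    have hTk : T ((k : N) : E) = 0 := k.2
    rw [ContinuousLinearMap.coe_coe, hT'z, hFz, hPz]
    rw [map_add, map_sub, hTPx, hTk, sub_zero, add_zero, show T x = u from hx, hk]
    exact huv
  have hker' : LinearMap.ker (T' : E →ₗ[ℂ] E) = ⊥ := aux_inj_of_surj hK' hsurj'
  have hz₀mem : ((z₀ : N) : E) ∈ LinearMap.ker (T' : E →ₗ[ℂ] E) := by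
    have hz₀N : ((z₀ : N) : E) ∈ N := z₀.2
    have hT0 : T ((z₀ : N) : E) = 0 := hz₀N
    have hP0 : P ((z₀ : N) : E) = z₀ := orthogonalProjection_mem_subspace_eq_self z₀
    have : T' ((z₀ : N) : E) = 0 := by
      rw [hT'z, hFz, hP0, hT0, hjz₀]
      simp
    exact this
  rw [hker'] at hz₀mem
  have : ((z₀ : N) : E) = 0 := hz₀mem
  have hz₀0 : z₀ = 0 := by exact_mod_cast this
  exact b.ne_zero _ hz₀0

lemma aux_fredholm_one_sub_compact {K : E →L[ℂ] E} (hK : IsCompactOperator K) :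
    IsFredholmIndexZero (1 - K) := by
  have hkfd := aux_ker_findim hK
  have hcl := aux_closed_range hK
  haveI : CompleteSpace (LinearMap.range ((1 - K : E →L[ℂ] E) : E →ₗ[ℂ] E) : Submodule ℂ E) := hcl.completeSpace_coe
  obtain ⟨hWfd, hmn⟩ := aux_coker_le hK
  have hnm := aux_ker_le hK hWfd
  have compl := Submodule.isCompl_orthogonal_of_hasOrthogonalProjection
    (K := (LinearMap.range ((1 - K : E →L[ℂ] E) : E →ₗ[ℂ] E) : Submodule ℂ E))
  have equiv := Submodule.quotientEquivOfIsCompl _ _ compl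
  refine ⟨hkfd, hcl, ?_, ?_⟩
  · exact Module.Finite.equiv equiv.symm
  · rw [LinearEquiv.finrank_eq equiv]
    omega

lemma aux_comp_left (V : E ≃L[ℂ] E) {A : E →L[ℂ] E} (h : IsFredholmIndexZero A) :
    IsFredholmIndexZero ((V : E →L[ℂ] E) ∘L A) := by
  obtain ⟨h1, h2, h3, h4⟩ := h
  have hker : LinearMap.ker (((V : E →L[ℂ] E) ∘L A : E →L[ℂ] E) : E →ₗ[ℂ] E) = LinearMap.ker (A : E →ₗ[ℂ] E) := by
    ext z
    simp only [LinearMap.mem_ker, ContinuousLinearMap.coe_comp', Function.comp_apply,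
      ContinuousLinearMap.coe_coe]
    exact ⟨fun hz => by simpa using V.map_eq_zero_iff.mp hz, fun hz => by rw [hz, map_zero]⟩
  have hmap : (LinearMap.range (A : E →ₗ[ℂ] E)).map (V.toLinearEquiv : E →ₗ[ℂ] E) =
      LinearMap.range (((V : E →L[ℂ] E) ∘L A : E →L[ℂ] E) : E →ₗ[ℂ] E) := by
    ext y
    constructor
    · rintro ⟨u, ⟨x, rfl⟩, rfl⟩
      exact ⟨x, rfl⟩
    · rintro ⟨x, rfl⟩
      exact ⟨A x, ⟨x, rfl⟩, rfl⟩
  refine ⟨by rw [hker]; exact h1, ?_, ?_, ?_⟩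
  · rw [← hmap]
    have : ((LinearMap.range (A : E →ₗ[ℂ] E)).map (V.toLinearEquiv : E →ₗ[ℂ] E) : Set E) =
        ⇑V '' ((LinearMap.range (A : E →ₗ[ℂ] E) : Submodule ℂ E) : Set E) := by
      rw [Submodule.map_coe]
      rfl
    rw [this]
    exact V.toHomeomorph.isClosedMap _ h2
  · exact Module.Finite.equiv (Submodule.Quotient.equiv _ _ V.toLinearEquiv hmap)
  · rw [hker, h4]
    exact LinearEquiv.finrank_eq (Submodule.Quotient.equiv _ _ V.toLinearEquiv hmap)

theorem aux_fredholm_of_Tcoercive (G K : E →L[ℂ] E) (X : E ≃L[ℂ] E)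
    (hK : IsCompactOperator K) (C : ℝ) (hC : 0 < C)
    (h : ∀ z, C * ‖z‖ ^ 2 - (inner ℂ (K z) z : ℂ).re ≤ (inner ℂ (G z) (X z) : ℂ).re) :
    IsFredholmIndexZero G := by
  set A : E →L[ℂ] E := (ContinuousLinearMap.adjoint (X : E →L[ℂ] E)) ∘L G with hAdef
  have hA : ∀ z, (inner ℂ (A z) z : ℂ).re = (inner ℂ (G z) (X z) : ℂ).re := by
    intro z
    rw [hAdef, ContinuousLinearMap.comp_apply, ContinuousLinearMap.adjoint_inner_left]
    rfl
  set S : E →L[ℂ] E := A + K with hSdef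
  have hScoer : ∀ z, C * ‖z‖ ^ 2 ≤ (inner ℂ (S z) z : ℂ).re := by
    intro z
    have h1 := h z
    rw [← hA z] at h1
    have h2 : (inner ℂ (S z) z : ℂ).re = (inner ℂ (A z) z : ℂ).re + (inner ℂ (K z) z : ℂ).re := by
      rw [hSdef, ContinuousLinearMap.add_apply, inner_add_left, Complex.add_re]
    linarith
  have hlow : ∀ z, C * ‖z‖ ≤ ‖S z‖ := by
    intro z
    rcases eq_or_ne z 0 with rfl | hz
    · simp
    · have hzpos : 0 < ‖z‖ := norm_pos_iff.mpr hz
      have h1 : C * ‖z‖ ^ 2 ≤ ‖S z‖ * ‖z‖ := by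
        have h2 : (inner ℂ (S z) z : ℂ).re ≤ ‖(inner ℂ (S z) z : ℂ)‖ :=
          Complex.re_le_norm _
        exact le_trans (hScoer z) (le_trans h2 (norm_inner_le_norm _ _))
      nlinarith
  have hSker : LinearMap.ker (S : E →ₗ[ℂ] E) = ⊥ := by
    rw [LinearMap.ker_eq_bot']
    intro z hz
    have h1 := hlow z
    rw [show S z = 0 from hz] at h1
    simp only [norm_zero] at h1
    have h3 : ‖z‖ = 0 := le_antisymm (by nlinarith) (norm_nonneg z)
    exact norm_eq_zero.mp h3
  have hanti : AntilipschitzWith (C⁻¹.toNNReal) S := by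
    apply ContinuousLinearMap.antilipschitz_of_bound
    intro z
    rw [Real.coe_toNNReal _ (le_of_lt (inv_pos.mpr hC)),
      ← inv_mul_le_iff₀ (inv_pos.mpr hC), inv_inv]
    exact hlow z
  have hclosed : IsClosed ((LinearMap.range (S : E →ₗ[ℂ] E) : Submodule ℂ E) : Set E) := by
    have h1 : IsClosed (Set.range ⇑S) := hanti.isClosed_range S.uniformContinuous
    rwa [LinearMap.coe_range]
  haveI : CompleteSpace (LinearMap.range (S : E →ₗ[ℂ] E) : Submodule ℂ E) := hclosed.completeSpace_coe
  have horth : ((LinearMap.range (S : E →ₗ[ℂ] E) : Submodule ℂ E))ᗮ = ⊥ := by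
    rw [Submodule.eq_bot_iff]
    intro w hw
    have h0 : (inner ℂ (S w) w : ℂ) = 0 := (Submodule.mem_orthogonal _ _).mp hw (S w) ⟨w, rfl⟩
    have h1 := hScoer w
    rw [h0] at h1
    simp only [Complex.zero_re] at h1
    have h2 : ‖w‖ ^ 2 = 0 := le_antisymm (by nlinarith) (sq_nonneg _)
    have h3 : ‖w‖ = 0 := pow_eq_zero_iff two_ne_zero |>.mp h2
    exact norm_eq_zero.mp h3
  have hSrange : LinearMap.range (S : E →ₗ[ℂ] E) = ⊤ := Submodule.orthogonal_eq_bot_iff.mp horth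
  set Se : E ≃L[ℂ] E := ContinuousLinearEquiv.ofBijective S hSker hSrange with hSe
  have hSecoe : ∀ z, Se z = S z := fun z => rfl
  set K' : E →L[ℂ] E := (Se.symm : E →L[ℂ] E) ∘L K with hK'def
  have hK' : IsCompactOperator ⇑K' := by
    rw [hK'def, ContinuousLinearMap.coe_comp']
    exact hK.continuous_comp (Se.symm : E →L[ℂ] E).continuous
  have hfact : (Se : E →L[ℂ] E) ∘L (1 - K') = A := by
    ext z
    simp only [ContinuousLinearMap.comp_apply, ContinuousLinearMap.sub_apply,
      ContinuousLinearMap.one_apply, hK'def, ContinuousLinearMap.coe_coe]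
    rw [show ((Se : E →L[ℂ] E) : E → E) = ⇑Se from rfl]
    rw [map_sub]
    have h2 : Se ((Se.symm : E →L[ℂ] E) (K z)) = K z := by
      rw [show ((Se.symm : E →L[ℂ] E) : E → E) (K z) = Se.symm (K z) from rfl]
      exact Se.apply_symm_apply (K z)
    rw [h2, hSecoe]
    rw [hSdef]
    simp
  -- adjoint of X as an equivalence
  have hXid1 : ((X : E →L[ℂ] E).comp (X.symm : E →L[ℂ] E)) = ContinuousLinearMap.id ℂ E := by
    ext z
    simp
  have hXid2 : ((X.symm : E →L[ℂ] E).comp (X : E →L[ℂ] E)) = ContinuousLinearMap.id ℂ E := by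
    ext z
    simp
  have hXa1 : (ContinuousLinearMap.adjoint (X.symm : E →L[ℂ] E)).comp
      (ContinuousLinearMap.adjoint (X : E →L[ℂ] E)) = ContinuousLinearMap.id ℂ E := by
    rw [← ContinuousLinearMap.adjoint_comp, hXid1, ContinuousLinearMap.adjoint_id]
  have hXa2 : (ContinuousLinearMap.adjoint (X : E →L[ℂ] E)).comp
      (ContinuousLinearMap.adjoint (X.symm : E →L[ℂ] E)) = ContinuousLinearMap.id ℂ E := by
    rw [← ContinuousLinearMap.adjoint_comp, hXid2, ContinuousLinearMap.adjoint_id]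
  set Xa : E ≃L[ℂ] E := ContinuousLinearEquiv.equivOfInverse
    (ContinuousLinearMap.adjoint (X : E →L[ℂ] E))
    (ContinuousLinearMap.adjoint (X.symm : E →L[ℂ] E))
    (fun x => by
      conv_lhs => rw [← ContinuousLinearMap.comp_apply, hXa1]
      rfl)
    (fun x => by
      conv_lhs => rw [← ContinuousLinearMap.comp_apply, hXa2]
      rfl) with hXadef
  have hGfact : G = (Xa.symm : E →L[ℂ] E) ∘L A := by
    ext z
    have h2 : A z = Xa (G z) := rfl
    show G z = ((Xa.symm : E →L[ℂ] E) : E → E) (A z)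
    rw [show ((Xa.symm : E →L[ℂ] E) : E → E) = ⇑Xa.symm from rfl, h2,
      ContinuousLinearEquiv.symm_apply_apply]
  rw [hGfact, ← hfact]
  exact aux_comp_left Xa.symm (aux_comp_left Se (aux_fredholm_one_sub_compact hK'))

end AuxFredholm

lemma aux_congr {E₁ F₁ : Type*} [NormedAddCommGroup E₁] [NormedSpace ℂ E₁]
    [NormedAddCommGroup F₁] [NormedSpace ℂ F₁]
    (e : E₁ ≃L[ℂ] F₁) {A : E₁ →L[ℂ] E₁} (h : IsFredholmIndexZero A) :
    IsFredholmIndexZero ((e : E₁ →L[ℂ] F₁) ∘L A ∘L (e.symm : F₁ →L[ℂ] E₁)) := by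
  obtain ⟨h1, h2, h3, h4⟩ := h
  set B := (e : E₁ →L[ℂ] F₁) ∘L A ∘L (e.symm : F₁ →L[ℂ] E₁) with hB
  have hBz : ∀ z, B z = e (A (e.symm z)) := fun z => rfl
  have hker : LinearMap.ker (B : F₁ →ₗ[ℂ] F₁) = (LinearMap.ker (A : E₁ →ₗ[ℂ] E₁)).map (e.toLinearEquiv : E₁ →ₗ[ℂ] F₁) := by
    ext z
    constructor
    · intro hz
      have hz' : e (A (e.symm z)) = 0 := hz
      exact ⟨e.symm z, e.map_eq_zero_iff.mp hz', by simp⟩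
    · rintro ⟨u, hu, rfl⟩
      show B (e u) = 0
      rw [hBz]
      have h5 : e.symm (e u) = u := e.symm_apply_apply u
      rw [h5, show A u = 0 from hu, map_zero]
  have hmap : (LinearMap.range (A : E₁ →ₗ[ℂ] E₁)).map (e.toLinearEquiv : E₁ →ₗ[ℂ] F₁) = LinearMap.range (B : F₁ →ₗ[ℂ] F₁) := by
    ext y
    constructor
    · rintro ⟨u, ⟨x, rfl⟩, rfl⟩
      refine ⟨e x, ?_⟩
      rw [ContinuousLinearMap.coe_coe, hBz, e.symm_apply_apply]
      rfl
    · rintro ⟨x, rfl⟩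
      exact ⟨A (e.symm x), ⟨e.symm x, rfl⟩, rfl⟩
  have hkerEquiv : (LinearMap.ker (A : E₁ →ₗ[ℂ] E₁)) ≃ₗ[ℂ] (LinearMap.ker (B : F₁ →ₗ[ℂ] F₁)) := by
    rw [hker]
    exact e.toLinearEquiv.submoduleMap (LinearMap.ker (A : E₁ →ₗ[ℂ] E₁))
  refine ⟨Module.Finite.equiv hkerEquiv, ?_, ?_, ?_⟩
  · rw [← hmap]
    have h5 : (((LinearMap.range (A : E₁ →ₗ[ℂ] E₁)).map (e.toLinearEquiv : E₁ →ₗ[ℂ] F₁)) : Set F₁) =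
        ⇑e '' ((LinearMap.range (A : E₁ →ₗ[ℂ] E₁) : Submodule ℂ E₁) : Set E₁) := by
      rw [Submodule.map_coe]
      rfl
    rw [h5]
    exact e.toHomeomorph.isClosedMap _ h2
  · exact Module.Finite.equiv (Submodule.Quotient.equiv _ _ e.toLinearEquiv hmap)
  · rw [← LinearEquiv.finrank_eq hkerEquiv, h4]
    exact LinearEquiv.finrank_eq (Submodule.Quotient.equiv _ _ e.toLinearEquiv hmap)

/-- a block operator with a T-coercive diagonal part and off-diagonal part that
is compactly skew (its T-pairing is realized by a compact operator) is Fredholm of index 0. -/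
theorem stmt_19 {H₁ H₂ : Type*}
    [NormedAddCommGroup H₁] [InnerProductSpace ℂ H₁] [CompleteSpace H₁]
    [NormedAddCommGroup H₂] [InnerProductSpace ℂ H₂] [CompleteSpace H₂]
    (G D K₁ K₂ : (H₁ × H₂) →L[ℂ] (H₁ × H₂)) (X : (H₁ × H₂) ≃L[ℂ] (H₁ × H₂))
    (G₁₁ : H₁ →L[ℂ] H₁) (G₂₂ : H₂ →L[ℂ] H₂) (G₁₂ : H₂ →L[ℂ] H₁) (G₂₁ : H₁ →L[ℂ] H₂)
    (hG : ∀ z : H₁ × H₂, G z = (G₁₁ z.1 + G₁₂ z.2, G₂₁ z.1 + G₂₂ z.2))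
    (hD : ∀ z : H₁ × H₂, D z = (G₁₁ z.1, G₂₂ z.2))
    (hK₁ : IsCompactOperator K₁) (hK₂ : IsCompactOperator K₂)
    (C : ℝ) (hC : 0 < C)
    (hcoer : ∀ z : H₁ × H₂,
      C * (‖z.1‖ ^ 2 + ‖z.2‖ ^ 2) -
          ((inner ℂ ((K₁ z).1) z.1 : ℂ).re + (inner ℂ ((K₁ z).2) z.2 : ℂ).re) ≤
        (inner ℂ ((D z).1) ((X z).1) : ℂ).re + (inner ℂ ((D z).2) ((X z).2) : ℂ).re)
    (hoff : ∀ z : H₁ × H₂,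
      (inner ℂ (((G - D) z).1) ((X z).1) : ℂ).re + (inner ℂ (((G - D) z).2) ((X z).2) : ℂ).re =
        (inner ℂ ((K₂ z).1) z.1 : ℂ).re + (inner ℂ ((K₂ z).2) z.2 : ℂ).re) :
    IsFredholmIndexZero G := by
  classical
  set L : WithLp 2 (H₁ × H₂) ≃L[ℂ] (H₁ × H₂) := WithLp.prodContinuousLinearEquiv 2 ℂ H₁ H₂
    with hL
  set G' : WithLp 2 (H₁ × H₂) →L[ℂ] WithLp 2 (H₁ × H₂) :=
    (L.symm : (H₁ × H₂) →L[ℂ] WithLp 2 (H₁ × H₂)) ∘L G ∘L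
      (L : WithLp 2 (H₁ × H₂) →L[ℂ] (H₁ × H₂)) with hG'
  set K' : WithLp 2 (H₁ × H₂) →L[ℂ] WithLp 2 (H₁ × H₂) :=
    (L.symm : (H₁ × H₂) →L[ℂ] WithLp 2 (H₁ × H₂)) ∘L (K₁ - K₂) ∘L
      (L : WithLp 2 (H₁ × H₂) →L[ℂ] (H₁ × H₂)) with hK'
  set X' : WithLp 2 (H₁ × H₂) ≃L[ℂ] WithLp 2 (H₁ × H₂) := (L.trans X).trans L.symm with hX'
  have hK'c : IsCompactOperator ⇑K' := by
    have h1 : IsCompactOperator ⇑(K₁ - K₂) := by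
      have : ⇑(K₁ - K₂) = ⇑K₁ - ⇑K₂ := by funext z; simp
      rw [this]
      exact hK₁.sub hK₂
    have h2 : IsCompactOperator (⇑(K₁ - K₂) ∘ ⇑(L : WithLp 2 (H₁ × H₂) →L[ℂ] (H₁ × H₂))) :=
      h1.comp_clm _
    have h3 := h2.continuous_comp
      (L.symm : (H₁ × H₂) →L[ℂ] WithLp 2 (H₁ × H₂)).continuous
    have h4 : ⇑K' = ⇑(L.symm : (H₁ × H₂) →L[ℂ] WithLp 2 (H₁ × H₂)) ∘
        (⇑(K₁ - K₂) ∘ ⇑(L : WithLp 2 (H₁ × H₂) →L[ℂ] (H₁ × H₂))) := by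
      funext z; rfl
    rw [h4]
    exact h3
  have hcoercive : ∀ z : WithLp 2 (H₁ × H₂),
      C * ‖z‖ ^ 2 - (inner ℂ (K' z) z : ℂ).re ≤ (inner ℂ (G' z) (X' z) : ℂ).re := by
    intro z
    set y : H₁ × H₂ := L z with hy
    have hnorm : ‖z‖ ^ 2 = ‖y.1‖ ^ 2 + ‖y.2‖ ^ 2 := by
      rw [WithLp.prod_norm_sq_eq_of_L2]
      rfl
    have hKz : (inner ℂ (K' z) z : ℂ).re =
        ((inner ℂ ((K₁ y).1) y.1 : ℂ).re + (inner ℂ ((K₁ y).2) y.2 : ℂ).re)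
          - ((inner ℂ ((K₂ y).1) y.1 : ℂ).re + (inner ℂ ((K₂ y).2) y.2 : ℂ).re) := by
      rw [WithLp.prod_inner_apply, Complex.add_re]
      have h1 : (K' z).ofLp.1 = (K₁ y).1 - (K₂ y).1 := rfl
      have h2 : (K' z).ofLp.2 = (K₁ y).2 - (K₂ y).2 := rfl
      have h3 : z.ofLp.1 = y.1 := rfl
      have h4 : z.ofLp.2 = y.2 := rfl
      rw [h1, h2, h3, h4, inner_sub_left, inner_sub_left, Complex.sub_re, Complex.sub_re]
      ring
    have hGz : (inner ℂ (G' z) (X' z) : ℂ).re =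
        (inner ℂ ((G y).1) ((X y).1) : ℂ).re + (inner ℂ ((G y).2) ((X y).2) : ℂ).re := by
      rw [WithLp.prod_inner_apply, Complex.add_re]
      have h1 : (G' z).ofLp.1 = (G y).1 := rfl
      have h2 : (G' z).ofLp.2 = (G y).2 := rfl
      have h3 : (X' z).ofLp.1 = (X y).1 := rfl
      have h4 : (X' z).ofLp.2 = (X y).2 := rfl
      rw [h1, h2, h3, h4]
    have hD1 := hcoer y
    have hO1 := hoff y
    have hsplit1 : (inner ℂ (((G - D) y).1) ((X y).1) : ℂ).re
        = (inner ℂ ((G y).1) ((X y).1) : ℂ).re - (inner ℂ ((D y).1) ((X y).1) : ℂ).re := by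
      have h5 : ((G - D) y).1 = (G y).1 - (D y).1 := rfl
      rw [h5, inner_sub_left, Complex.sub_re]
    have hsplit2 : (inner ℂ (((G - D) y).2) ((X y).2) : ℂ).re
        = (inner ℂ ((G y).2) ((X y).2) : ℂ).re - (inner ℂ ((D y).2) ((X y).2) : ℂ).re := by
      have h5 : ((G - D) y).2 = (G y).2 - (D y).2 := rfl
      rw [h5, inner_sub_left, Complex.sub_re]
    rw [hnorm, hKz, hGz]
    rw [hsplit1, hsplit2] at hO1
    linarith
  have hfred : IsFredholmIndexZero G' :=
    aux_fredholm_of_Tcoercive G' K' X' hK'c C hC hcoercive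
  have h2 := aux_congr L hfred
  have h3 : (L : WithLp 2 (H₁ × H₂) →L[ℂ] (H₁ × H₂)) ∘L G' ∘L
      (L.symm : (H₁ × H₂) →L[ℂ] WithLp 2 (H₁ × H₂)) = G := by
    apply ContinuousLinearMap.ext
    intro z
    show L (G' (L.symm z)) = G z
    show L (L.symm (G (L (L.symm z)))) = G z
    rw [L.apply_symm_apply, L.apply_symm_apply]
  rwa [h3] at h2
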